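/- The map φ(z₁,z₂) = (z₁ + i z₂, -z₁ + i z₂) is a bijection from the Lie ball L₂ = {z ∈ ℂ² : ‖z‖ < 1, 2‖z‖² - |z₁² + z₂²|² < 1} onto the open bidisc 𝔻² = {(w₁,w₂) ∈ ℂ² : |w₁| < 1 and |w₂| < 1}. -/

import Mathlib

/-!
Put `w = φ z`. By the parallelogram law `|w₁|² + |w₂|² = 2‖z‖²`, and
`w₁ w₂ = -(z₁² + z₂²)`, so the two inequalities defining the Lie ball read
`|w₁|² + |w₂|² < 2` and `(1 - |w₁|²)(1 - |w₂|²) > 0`, i.e. `|w₁|, |w₂| < 1`.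
So the Lie ball is the preimage of the bidisc under the invertible linear map `φ`.
-/

open Complex

lemma lt_one_and_lt_one_iff (x y : ℝ) :
    x < 1 ∧ y < 1 ↔ x + y < 2 ∧ x + y - x * y < 1 := by
  constructor
  · rintro ⟨hx, hy⟩
    exact ⟨by linarith, by nlinarith [mul_pos (sub_pos.2 hx) (sub_pos.2 hy)]⟩
  · rintro ⟨hsum, hprod⟩
    have hprod' : 0 < (1 - x) * (1 - y) := by linarith
    rcases mul_pos_iff.1 hprod' with ⟨hx, hy⟩ | ⟨hx, hy⟩
    · exact ⟨by linarith, by linarith⟩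
    · linarith

lemma Complex.norm_add_I_mul_sq_add_norm_neg_add_I_mul_sq (a b : ℂ) :
    ‖a + I * b‖ ^ 2 + ‖-a + I * b‖ ^ 2 = 2 * (‖a‖ ^ 2 + ‖b‖ ^ 2) := by
  have hneg : ‖-a + I * b‖ = ‖a - I * b‖ := by rw [← norm_neg, neg_add, neg_neg, sub_eq_add_neg]
  rw [hneg, parallelogram_law_with_norm ℂ, norm_mul, norm_I, one_mul]

lemma Complex.norm_add_I_mul_mul_norm_neg_add_I_mul (a b : ℂ) :
    ‖a + I * b‖ * ‖-a + I * b‖ = ‖a ^ 2 + b ^ 2‖ := by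
  rw [← norm_mul, ← norm_neg]
  congr 1
  linear_combination (-b ^ 2) * I_sq

def lieBall : Set (ℂ × ℂ) :=
  {z | ‖z.1‖ ^ 2 + ‖z.2‖ ^ 2 < 1 ∧ 2 * (‖z.1‖ ^ 2 + ‖z.2‖ ^ 2) - ‖z.1 ^ 2 + z.2 ^ 2‖ ^ 2 < 1}

def bidisc : Set (ℂ × ℂ) := {w | ‖w.1‖ < 1 ∧ ‖w.2‖ < 1}

def lieBallToBidisc (z : ℂ × ℂ) : ℂ × ℂ := (z.1 + I * z.2, -z.1 + I * z.2)

lemma lieBall_eq_preimage_bidisc : lieBall = lieBallToBidisc ⁻¹' bidisc := by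
  ext ⟨a, b⟩
  have hsum := norm_add_I_mul_sq_add_norm_neg_add_I_mul_sq a b
  have hprod := norm_add_I_mul_mul_norm_neg_add_I_mul a b
  simp only [lieBall, bidisc, lieBallToBidisc, Set.mem_ofPred_eq, Set.mem_preimage]
  rw [← sq_lt_one_iff₀ (norm_nonneg _), ← sq_lt_one_iff₀ (norm_nonneg (-a + I * b)),
    lt_one_and_lt_one_iff (‖a + I * b‖ ^ 2), ← mul_pow, hprod, hsum]
  constructor <;> rintro ⟨h₁, h₂⟩ <;> constructor <;> linarith

lemma bijective_lieBallToBidisc : lieBallToBidisc.Bijective := by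
  refine Function.bijective_iff_has_inverse.2
    ⟨fun w => ((w.1 - w.2) / 2, -I * (w.1 + w.2) / 2), fun z => ?_, fun w => ?_⟩
  · ext <;> simp only [lieBallToBidisc]
    · ring
    · linear_combination (-z.2) * I_sq
  · ext <;> simp only [lieBallToBidisc] <;> linear_combination (-(w.1 + w.2) / 2) * I_sq

theorem stmt8 :
    Set.BijOn (fun z : ℂ × ℂ => (z.1 + Complex.I * z.2, -z.1 + Complex.I * z.2))
      {z : ℂ × ℂ | ‖z.1‖ ^ 2 + ‖z.2‖ ^ 2 < 1 ∧
        2 * (‖z.1‖ ^ 2 + ‖z.2‖ ^ 2) -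
          ‖z.1 ^ 2 + z.2 ^ 2‖ ^ 2 < 1}
      {w : ℂ × ℂ | ‖w.1‖ < 1 ∧ ‖w.2‖ < 1} := by
  change Set.BijOn lieBallToBidisc lieBall bidisc
  rw [lieBall_eq_preimage_bidisc]
  exact bijective_lieBallToBidisc.bijOn_preimage
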